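/- If a functor F : C ⥤ X between categories with pullbacks preserves pullbacks and reflects monomorphisms, then F reflects pullback stable essential monomorphisms: if F(m) is a pullback stable essential monomorphism in X, then m is a pullback stable essential monomorphism in C. -/
import Mathlib

open CategoryTheory Limits

/-- A morphism `m` is an essential monomorphism if it is a monomorphism and every
morphism `f` such that `m ≫ f` is a monomorphism is itself a monomorphism. -/
def IsEssentialMono {C : Type*} [CategoryTheory.Category C] {S A : C} (m : S ⟶ A) : Prop :=
  CategoryTheory.Mono m ∧
    ∀ ⦃B : C⦄ (f : A ⟶ B), CategoryTheory.Mono (m ≫ f) → CategoryTheory.Mono f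

/-- A morphism `m : S ⟶ A` is a pullback stable essential monomorphism if for every
morphism `u : X ⟶ A` the pullback projection `S ×_A X ⟶ X` of `m` along `u` is an
essential monomorphism. -/
def IsStableEssentialMono {C : Type*} [CategoryTheory.Category C]
    [CategoryTheory.Limits.HasPullbacks C] {S A : C} (m : S ⟶ A) : Prop :=
  ∀ ⦃X : C⦄ (u : X ⟶ A), IsEssentialMono (CategoryTheory.Limits.pullback.snd m u)

/-- If a functor preserves pullbacks and reflects monomorphisms, then it reflects
pullback stable essential monomorphisms. -/
theorem reflects_stableEssentialMono {C : Type*} [Category C] {X : Type*} [Category X]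
    [HasPullbacks C] [HasPullbacks X] (F : C ⥤ X)
    [PreservesLimitsOfShape WalkingCospan F] [F.ReflectsMonomorphisms]
    {S A : C} (m : S ⟶ A) (h : IsStableEssentialMono (F.map m)) :
    IsStableEssentialMono m := by
  intro Y u
  obtain ⟨hmono, hess⟩ := h (F.map u)
  have key : F.map (pullback.snd m u) =
      (PreservesPullback.iso F m u).hom ≫ pullback.snd (F.map m) (F.map u) :=
    (PreservesPullback.iso_hom_snd F m u).symm
  constructor
  · apply F.mono_of_mono_map
    rw [key]
    infer_instance
  · intro B f hf
    apply F.mono_of_mono_map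
    have : Mono (F.map (pullback.snd m u ≫ f)) := F.map_mono _
    rw [F.map_comp, key, Category.assoc] at this
    have h2 : Mono (pullback.snd (F.map m) (F.map u) ≫ F.map f) := by
      rw [show pullback.snd (F.map m) (F.map u) ≫ F.map f =
          (PreservesPullback.iso F m u).inv ≫
            ((PreservesPullback.iso F m u).hom ≫ pullback.snd (F.map m) (F.map u) ≫ F.map f) by
        simp]
      exact mono_comp _ _
    exact hess (F.map f) h2
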